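/- arXiv:1407.6568 — 2 statements merged into one kernel-verified Lean document; each statement's English description precedes it below -/
import Mathlib

section
/- If a finite multiplicative matrix semigroup S of d×d real matrices does not contain the zero matrix, then every element of S has spectral radius exactly 1. -/
/-!
By pigeonhole, the powers of `A ∈ S` satisfy `A ^ m * A ^ r = A ^ m` for some `m ≥ 1`, `r ≥ 1`.
Every eigenvalue `z` then satisfies `z ^ m * z ^ r = z ^ m`, so `z = 0` or `z ^ r = 1`, which
gives `ρ(A) ≤ 1`. Since `A ^ m ∈ S` is nonzero and annihilated on the right by `1 - A ^ r`, the
matrix `1 - A ^ r` is singular; so `1` is an eigenvalue of `A ^ r`, and by spectral mapping some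
eigenvalue of `A` is an `r`-th root of unity, which gives `ρ(A) ≥ 1`.
-/

/-- The spectral radius of a real matrix: the maximal modulus of its (complex) eigenvalues. -/
noncomputable def specRad {n : Type*} [Fintype n] [DecidableEq n]
    (A : Matrix n n ℝ) : ENNReal :=
  spectralRadius ℂ (A.map (algebraMap ℝ ℂ))

theorem exists_pow_mul_pow_eq_pow_of_finite_range {M : Type*} [Monoid M] {a : M}
    (h : (Set.range (a ^ · : ℕ → M)).Finite) : ∃ m r : ℕ, 0 < r ∧ a ^ m * a ^ r = a ^ m := by
  obtain ⟨m, n, hmn, he⟩ := h.exists_lt_map_eq_of_forall_mem (f := (a ^ · : ℕ → M))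
    Set.mem_range_self
  exact ⟨m, n - m, Nat.sub_pos_of_lt hmn, by rw [← pow_add, Nat.add_sub_cancel' hmn.le, he]⟩

theorem pow_succ_mem_of_mul_mem {M : Type*} [Monoid M] {S : Set M}
    (hmul : ∀ a ∈ S, ∀ b ∈ S, a * b ∈ S) {a : M} (ha : a ∈ S) (k : ℕ) : a ^ (k + 1) ∈ S := by
  induction k with
  | zero => simpa using ha
  | succ k ih => exact pow_succ a (k + 1) ▸ hmul _ ih _ ha

theorem nnnorm_eq_one_of_pow_eq_one {𝕜 : Type*} [NormedDivisionRing 𝕜] {z : 𝕜} {r : ℕ}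
    (h : z ^ r = 1) (hr : r ≠ 0) : ‖z‖₊ = 1 :=
  (pow_eq_one_iff_of_nonneg zero_le hr).mp (by rw [← nnnorm_pow, h, nnnorm_one])

namespace spectrum

open Polynomial in
theorem pow_mul_pow_eq_pow_of_mem {𝕜 A : Type*} [Field 𝕜] [Ring A] [Algebra 𝕜 A] {a : A}
    {m r : ℕ} (h : a ^ m * a ^ r = a ^ m) {z : 𝕜} (hz : z ∈ spectrum 𝕜 a) :
    z ^ m * z ^ r = z ^ m := by
  cases subsingleton_or_nontrivial A
  · simp [of_subsingleton] at hz
  have hmem := subset_polynomial_aeval a (X ^ m * X ^ r - X ^ m) ⟨z, hz, rfl⟩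
  simp only [map_sub, map_mul, aeval_X_pow, h, sub_self, zero_eq, Set.mem_singleton_iff,
    eval_sub, eval_mul, eval_X_pow] at hmem
  exact sub_eq_zero.mp hmem

theorem one_mem_of_mul_eq_self {R A : Type*} [CommSemiring R] [Ring A] [Algebra R A]
    {b c : A} (hb : b ≠ 0) (h : b * c = b) : (1 : R) ∈ spectrum R c := by
  rw [mem_iff, map_one]
  intro hu
  exact hb <| hu.mul_left_eq_zero.mp (by rw [mul_sub, mul_one, h, sub_self])

end spectrum

section SpectralRadius

variable {𝕜 A : Type*} [NormedField 𝕜] [Ring A] [Algebra 𝕜 A]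

theorem spectralRadius_le_one_of_pow_mul_pow_eq_pow {a : A} {m r : ℕ} (hr : 0 < r)
    (h : a ^ m * a ^ r = a ^ m) : spectralRadius 𝕜 a ≤ 1 := by
  refine iSup₂_le fun z hz => ?_
  rw [← ENNReal.coe_one, ENNReal.coe_le_coe]
  rcases eq_or_ne z 0 with rfl | hz0
  · simp
  have hzr : z ^ r = 1 := by
    simpa using mul_left_cancel₀ (pow_ne_zero m hz0)
      ((spectrum.pow_mul_pow_eq_pow_of_mem h hz).trans (mul_one _).symm)
  exact (nnnorm_eq_one_of_pow_eq_one hzr hr.ne').le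

theorem one_le_spectralRadius_of_one_mem_spectrum_pow [IsAlgClosed 𝕜] {a : A} {r : ℕ}
    (hr : 0 < r) (h : (1 : 𝕜) ∈ spectrum 𝕜 (a ^ r)) : 1 ≤ spectralRadius 𝕜 a := by
  obtain ⟨z, hz, hzr : z ^ r = 1⟩ := spectrum.map_pow_of_pos (𝕜 := 𝕜) a hr ▸ h
  calc (1 : ENNReal) = ‖z‖₊ := by rw [nnnorm_eq_one_of_pow_eq_one hzr hr.ne', ENNReal.coe_one]
    _ ≤ spectralRadius 𝕜 a :=
      le_iSup₂ (f := fun k (_ : k ∈ spectrum 𝕜 a) => (‖k‖₊ : ENNReal)) z hz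

theorem spectralRadius_eq_one_of_pow_mul_pow_eq_pow [IsAlgClosed 𝕜] {a : A} {m r : ℕ}
    (hr : 0 < r) (hm : a ^ m ≠ 0) (h : a ^ m * a ^ r = a ^ m) : spectralRadius 𝕜 a = 1 :=
  le_antisymm (spectralRadius_le_one_of_pow_mul_pow_eq_pow hr h)
    (one_le_spectralRadius_of_one_mem_spectrum_pow hr (spectrum.one_mem_of_mul_eq_self hm h))

end SpectralRadius

/-- If a finite multiplicative matrix semigroup `S` of `d×d` real matrices does not
contain the zero matrix, then every element of `S` has spectral radius exactly `1`. -/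
theorem stmt1 {d : ℕ} (S : Set (Matrix (Fin d) (Fin d) ℝ))
    (hfin : S.Finite)
    (hmul : ∀ A ∈ S, ∀ B ∈ S, A * B ∈ S)
    (h0 : (0 : Matrix (Fin d) (Fin d) ℝ) ∉ S) :
    ∀ A ∈ S, specRad A = 1 := by
  intro A hA
  have hpow := pow_succ_mem_of_mul_mem hmul hA
  have hrange : (Set.range (A ^ · : ℕ → Matrix (Fin d) (Fin d) ℝ)).Finite := by
    refine (hfin.insert 1).subset ?_
    rintro _ ⟨_ | k, rfl⟩
    exacts [Set.mem_insert _ _, Set.mem_insert_of_mem _ (hpow k)]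
  obtain ⟨m, r, hr, h⟩ := exists_pow_mul_pow_eq_pow_of_finite_range hrange
  let f := (algebraMap ℝ ℂ).mapMatrix (m := Fin d)
  have hm : f A ^ (m + 1) ≠ 0 := by
    rw [← map_pow, map_ne_zero_iff f (Matrix.map_injective (algebraMap ℝ ℂ).injective)]
    exact fun h => h0 (h ▸ hpow m)
  refine spectralRadius_eq_one_of_pow_mul_pow_eq_pow hr hm ?_
  change f A ^ (m + 1) * f A ^ r = f A ^ (m + 1)
  rw [← map_pow, ← map_pow, ← map_mul, pow_succ', mul_assoc, h]
end

section
/- Let S be a semigroup of nonnegative d×d matrices possessing a common invariant affine subspace V with 0 ∉ V such that P = V ∩ ℝ^d_+ is nonempty and bounded and contains a point z in the interior of ℝ^d_+. Then there exist constants 0 < C₁ ≤ C₂ such that C₁ ≤ ‖A‖ ≤ C₂ for all A ∈ S; that is, S is bounded and separated from zero in operator norm. -/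
/-- Let `S` be a semigroup of nonnegative `d×d` matrices with a common invariant affine
subspace `V`, `0 ∉ V`, such that `P = V ∩ ℝ^d_+` is bounded and contains a point with all
coordinates strictly positive. Then `S` is bounded and separated from zero in the
(Euclidean) operator norm: there are `0 < C₁ ≤ C₂` with `C₁ ≤ ‖A‖ ≤ C₂` for all `A ∈ S`. -/
theorem stmt9 {d : ℕ} (S : Set (Matrix (Fin d) (Fin d) ℝ))
    (hmul : ∀ A ∈ S, ∀ B ∈ S, A * B ∈ S)
    (hnn : ∀ A ∈ S, ∀ i j, 0 ≤ A i j)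
    (V : AffineSubspace ℝ (Fin d → ℝ))
    (hinv : ∀ A ∈ S, ∀ v ∈ V, A.mulVec v ∈ V)
    (h0 : (0 : Fin d → ℝ) ∉ V)
    (hbdd : Bornology.IsBounded {x : Fin d → ℝ | x ∈ V ∧ ∀ i, 0 ≤ x i})
    (hz : ∃ z : Fin d → ℝ, z ∈ V ∧ ∀ i, 0 < z i) :
    ∃ C₁ C₂ : ℝ, 0 < C₁ ∧ C₁ ≤ C₂ ∧ ∀ A ∈ S,
      C₁ ≤ ‖(Matrix.toEuclideanCLM (𝕜 := ℝ) A :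
              EuclideanSpace ℝ (Fin d) →L[ℝ] EuclideanSpace ℝ (Fin d))‖ ∧
      ‖(Matrix.toEuclideanCLM (𝕜 := ℝ) A :
              EuclideanSpace ℝ (Fin d) →L[ℝ] EuclideanSpace ℝ (Fin d))‖ ≤ C₂ := by
  classical
  obtain ⟨z, hzV, hzp⟩ := hz
  set P : Set (Fin d → ℝ) := {x : Fin d → ℝ | x ∈ V ∧ ∀ i, 0 ≤ x i} with hPdef
  have hzP : z ∈ P := ⟨hzV, fun i => (hzp i).le⟩
  -- the Euclidean norm as a function on the plain pi type
  set g : (Fin d → ℝ) → ℝ := fun x => Real.sqrt (∑ i, x i ^ 2) with hgdef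
  have hgnorm : ∀ x : Fin d → ℝ,
      g x = ‖(WithLp.equiv 2 (Fin d → ℝ)).symm x‖ := by
    intro x
    rw [EuclideanSpace.norm_eq]
    simp only [hgdef, WithLp.equiv_symm_apply, WithLp.ofLp_toLp, Real.norm_eq_abs, sq_abs]
  have hgcont : Continuous g := by
    apply Real.continuous_sqrt.comp
    exact continuous_finset_sum _ fun i _ => (continuous_apply i).pow 2
  have hg0 : ∀ x : Fin d → ℝ, g x = 0 → x = 0 := by
    intro x hx
    have := hgnorm x
    rw [hx] at this
    have h1 : (WithLp.equiv 2 (Fin d → ℝ)).symm x = 0 := by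
      exact norm_eq_zero.mp this.symm
    have := congrArg (WithLp.equiv 2 (Fin d → ℝ)) h1
    simpa using this
  have hgnn : ∀ x : Fin d → ℝ, 0 ≤ g x := fun x => Real.sqrt_nonneg _
  -- P is compact
  have hVc : IsClosed (V : Set (Fin d → ℝ)) := V.closed_of_finiteDimensional
  have hOc : IsClosed {x : Fin d → ℝ | ∀ i, 0 ≤ x i} := by
    have : {x : Fin d → ℝ | ∀ i, 0 ≤ x i} = ⋂ i, {x : Fin d → ℝ | 0 ≤ x i} := by
      ext x; simp
    rw [this]
    exact isClosed_iInter fun i => isClosed_le continuous_const (continuous_apply i)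
  have hPc : IsClosed P := hVc.inter hOc
  have hPcomp : IsCompact P := Metric.isCompact_of_isClosed_isBounded hPc hbdd
  -- minimum of g on P
  obtain ⟨x₀, hx₀P, hx₀min⟩ := hPcomp.exists_isMinOn ⟨z, hzP⟩ hgcont.continuousOn
  have hx₀ne : x₀ ≠ 0 := fun h => h0 (h ▸ hx₀P.1)
  have hgx₀pos : 0 < g x₀ := by
    rcases (hgnn x₀).lt_or_eq with h | h
    · exact h
    · exact absurd (hg0 x₀ h.symm) hx₀ne
  -- bound on P
  obtain ⟨M, hM⟩ := isBounded_iff_forall_norm_le.mp hbdd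
  have hMnn : 0 ≤ M := le_trans (norm_nonneg z) (hM z hzP)
  have hcoordM : ∀ x ∈ P, ∀ i, x i ≤ M := by
    intro x hx i
    calc x i ≤ |x i| := le_abs_self _
    _ = ‖x i‖ := rfl
    _ ≤ ‖x‖ := norm_le_pi_norm x i
    _ ≤ M := hM x hx
  -- z nonzero, its Euclidean norm positive
  have hzne : z ≠ 0 := fun h => h0 (h ▸ hzV)
  have hgz : 0 < g z := by
    rcases (hgnn z).lt_or_eq with h | h
    · exact h
    · exact absurd (hg0 z h.symm) hzne
  -- entrywise bound for matrices in S
  set K : ℝ := ∑ j, M / z j with hKdef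
  have hKnn : 0 ≤ K :=
    Finset.sum_nonneg fun j _ => div_nonneg hMnn (hzp j).le
  have hmulVecP : ∀ A ∈ S, A.mulVec z ∈ P := by
    intro A hA
    refine ⟨hinv A hA z hzV, fun i => ?_⟩
    have he : (A.mulVec z) i = ∑ k, A i k * z k := by
      simp [Matrix.mulVec, dotProduct]
    rw [he]
    exact Finset.sum_nonneg fun j _ => mul_nonneg (hnn A hA i j) (hzp j).le
  have hentry : ∀ A ∈ S, ∀ i j, A i j ≤ M / z j := by
    intro A hA i j
    have h1 : A i j * z j ≤ (A.mulVec z) i := by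
      have : (A.mulVec z) i = ∑ k, A i k * z k := by
        simp [Matrix.mulVec, dotProduct]
      rw [this]
      exact Finset.single_le_sum (f := fun k => A i k * z k)
        (fun k _ => mul_nonneg (hnn A hA i k) (hzp k).le) (Finset.mem_univ j)
    have h2 : (A.mulVec z) i ≤ M := hcoordM _ (hmulVecP A hA) i
    rw [le_div_iff₀ (hzp j)]
    exact h1.trans h2
  refine ⟨g x₀ / g z, max (g x₀ / g z) (Real.sqrt d * K), div_pos hgx₀pos hgz,
    le_max_left _ _, fun A hA => ?_⟩
  have happ : ∀ x : Fin d → ℝ,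
      (Matrix.toEuclideanCLM (𝕜 := ℝ) A) ((WithLp.equiv 2 (Fin d → ℝ)).symm x) =
        (WithLp.equiv 2 (Fin d → ℝ)).symm (A.mulVec x) :=
    fun x => Matrix.toEuclideanCLM_toLp A x
  constructor
  · -- lower bound
    have h1 : g x₀ ≤ g (A.mulVec z) := hx₀min (hmulVecP A hA)
    have h2 : g (A.mulVec z) ≤
        ‖(Matrix.toEuclideanCLM (𝕜 := ℝ) A :
            EuclideanSpace ℝ (Fin d) →L[ℝ] EuclideanSpace ℝ (Fin d))‖ * g z := by
      rw [hgnorm (A.mulVec z), hgnorm z, ← happ]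
      exact ContinuousLinearMap.le_opNorm _ _
    rw [div_le_iff₀ hgz]
    exact h1.trans h2
  · -- upper bound
    refine le_trans ?_ (le_max_right _ _)
    refine ContinuousLinearMap.opNorm_le_bound _
      (mul_nonneg (Real.sqrt_nonneg _) hKnn) fun x => ?_
    set xp : Fin d → ℝ := WithLp.equiv 2 (Fin d → ℝ) x with hxp
    have hxeq : x = (WithLp.equiv 2 (Fin d → ℝ)).symm xp := rfl
    have hnx : ‖x‖ = g xp := by rw [hxeq, ← hgnorm]
    have hcoordx : ∀ j, |xp j| ≤ g xp := by
      intro j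
      have : (xp j) ^ 2 ≤ ∑ i, xp i ^ 2 :=
        Finset.single_le_sum (f := fun i => xp i ^ 2)
          (fun i _ => sq_nonneg _) (Finset.mem_univ j)
      calc |xp j| = Real.sqrt ((xp j) ^ 2) := (Real.sqrt_sq_eq_abs _).symm
      _ ≤ g xp := Real.sqrt_le_sqrt this
    have hrow : ∀ i, |(A.mulVec xp) i| ≤ K * g xp := by
      intro i
      have h1 : |(A.mulVec xp) i| ≤ ∑ j, A i j * |xp j| := by
        have : (A.mulVec xp) i = ∑ j, A i j * xp j := by
          simp [Matrix.mulVec, dotProduct]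
        rw [this]
        refine le_trans (Finset.abs_sum_le_sum_abs _ _) ?_
        refine Finset.sum_le_sum fun j _ => ?_
        rw [abs_mul, abs_of_nonneg (hnn A hA i j)]
      refine h1.trans ?_
      rw [hKdef, Finset.sum_mul]
      refine Finset.sum_le_sum fun j _ => ?_
      exact mul_le_mul (hentry A hA i j) (hcoordx j) (abs_nonneg _)
        (div_nonneg hMnn (hzp j).le)
    have hKg : 0 ≤ K * g xp := mul_nonneg hKnn (hgnn xp)
    have hsum : ∑ i, (A.mulVec xp) i ^ 2 ≤ d * (K * g xp) ^ 2 := by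
      calc ∑ i, (A.mulVec xp) i ^ 2 ≤ ∑ _i : Fin d, (K * g xp) ^ 2 := by
            refine Finset.sum_le_sum fun i _ => ?_
            rw [← sq_abs]
            exact pow_le_pow_left₀ (abs_nonneg _) (hrow i) 2
      _ = d * (K * g xp) ^ 2 := by simp [Finset.sum_const, mul_comm]
    calc ‖(Matrix.toEuclideanCLM (𝕜 := ℝ) A) x‖
        = g (A.mulVec xp) := by rw [hxeq, happ, ← hgnorm]
      _ ≤ Real.sqrt (d * (K * g xp) ^ 2) := Real.sqrt_le_sqrt hsum
      _ = Real.sqrt d * (K * g xp) := by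
            rw [Real.sqrt_mul (Nat.cast_nonneg d), Real.sqrt_sq hKg]
      _ = Real.sqrt d * K * ‖x‖ := by rw [hnx]; ring
end
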